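/- Let Λ be a free abelian group of finite rank, V = ℝ ⊗_ℤ Λ, and X a positive subset of Λ with X ≠ Λ. Then there exists a nonzero ℝ-linear form φ on V such that X ⊆ {λ ∈ Λ : φ(λ) ≥ 0}. -/

import Mathlib

/-!
Pick `l ∉ X`. Then `-l ∈ X`, so no positive multiple of `l` lies in the additive monoid `X`
(else `l = (n + 1) • l + n • (-l) ∈ X`). In coordinates `V ≃ ℝ^ι` given by a `ℤ`-basis of `Λ`,
this keeps `l` out of the real cone `C` spanned by `X`: from `l = ∑ rᵢ xᵢ` with `rᵢ ≥ 0`,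
simultaneous Dirichlet approximation gives `N ≥ 1` with every `N rᵢ` close to an integer `qᵢ ≥ 0`,
and then `N • l - ∑ qᵢ • xᵢ` is a lattice vector of norm `< 1`, i.e. `N • l ∈ X`.
A convex cone `C ≠ V` in finite dimension is not dense, so Hahn–Banach separates a point from
its closure, and the separating functional is `≥ 0` on `C`.
-/

open Pointwise
open scoped TensorProduct

def IsPositiveSubset {Λ : Type*} [AddCommGroup Λ] (X : Set Λ) : Prop :=
  X ∪ (-X) = Set.univ ∧ X + X ⊆ X ∧ ∃ H : AddSubgroup Λ, (H : Set Λ) = X ∩ (-X)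

namespace IsPositiveSubset

variable {Λ : Type*} [AddCommGroup Λ] {X : Set Λ}

theorem mem_or_neg_mem (hX : IsPositiveSubset X) (l : Λ) : l ∈ X ∨ -l ∈ X :=
  Set.eq_univ_iff_forall.1 hX.1 l

def toAddSubmonoid (hX : IsPositiveSubset X) : AddSubmonoid Λ where
  carrier := X
  add_mem' ha hb := hX.2.1 (Set.add_mem_add ha hb)
  zero_mem' := by simpa using hX.mem_or_neg_mem 0

theorem nsmul_notMem (hX : IsPositiveSubset X) {l : Λ} (hl : l ∉ X) {n : ℕ} (hn : n ≠ 0) :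
    n • l ∉ X := by
  obtain ⟨k, rfl⟩ := Nat.exists_eq_add_one_of_ne_zero hn
  let M := hX.toAddSubmonoid
  have hneg : -l ∈ M := (hX.mem_or_neg_mem l).resolve_left hl
  intro h
  have hsum : (k + 1) • l + k • -l ∈ M := M.add_mem h (M.nsmul_mem hneg k)
  rw [succ_nsmul, smul_neg, add_neg_cancel_comm] at hsum
  exact hl hsum

end IsPositiveSubset

theorem round_nonneg_of_nonneg {α : Type*} [Field α] [LinearOrder α] [IsStrictOrderedRing α]
    [FloorRing α] {x : α} (hx : 0 ≤ x) : 0 ≤ round x := by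
  rw [round_eq]
  exact Int.floor_nonneg.2 (by linarith)

theorem exists_pos_nat_forall_abs_mul_sub_round_lt {ι : Type*} [Fintype ι] (r : ι → ℝ) {ε : ℝ}
    (hε : 0 < ε) : ∃ N : ℕ, 0 < N ∧ ∀ i, |N * r i - round (N * r i)| < ε := by
  set u : ℕ → ι → ℝ := fun n i => Int.fract (n * r i)
  obtain ⟨a, -, φ, hφ, hlim⟩ := (isCompact_Icc (a := (0 : ι → ℝ)) (b := 1)).tendsto_subseq
    (x := u) fun n => ⟨fun i => Int.fract_nonneg _, fun i => (Int.fract_lt_one _).le⟩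
  obtain ⟨k, hk⟩ := Metric.cauchySeq_iff'.1 hlim.cauchySeq ε hε
  refine ⟨φ (k + 1) - φ k, Nat.sub_pos_of_lt (hφ (Nat.lt_add_one k)), fun i => ?_⟩
  calc |((φ (k + 1) - φ k : ℕ) : ℝ) * r i - round (((φ (k + 1) - φ k : ℕ) : ℝ) * r i)|
      ≤ |((φ (k + 1) - φ k : ℕ) : ℝ) * r i - (⌊φ (k + 1) * r i⌋ - ⌊φ k * r i⌋ : ℤ)| :=
        round_le _ _
    _ = dist (u (φ (k + 1)) i) (u (φ k) i) := by
        rw [Nat.cast_sub (hφ (Nat.lt_add_one k)).le, Real.dist_eq]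
        simp only [u, Int.fract]
        push_cast
        ring_nf
    _ ≤ dist (u (φ (k + 1))) (u (φ k)) := dist_le_pi_dist _ _ i
    _ < ε := hk (k + 1) (Nat.le_add_right k 1)

theorem AddSubmonoid.exists_nsmul_mem_of_map_mem_hull {Λ E : Type*} [AddCommGroup Λ]
    [NormedAddCommGroup E] [NormedSpace ℝ E] (M : AddSubmonoid Λ) (f : Λ →+ E)
    (hf : ∀ μ, ‖f μ‖ < 1 → μ = 0) {l : Λ} (hl : f l ∈ PointedCone.hull ℝ (f '' M)) :
    ∃ N : ℕ, 0 < N ∧ N • l ∈ M := by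
  obtain ⟨n, c, g, hsum⟩ := Submodule.mem_span_set'.1 hl
  choose m hmM hfm using fun i => (g i).2
  set K := ∑ i, ‖f (m i)‖
  have hK : 0 < K + 1 := by positivity
  obtain ⟨N, hN, hround⟩ := exists_pos_nat_forall_abs_mul_sub_round_lt (fun i => (c i : ℝ))
    (inv_pos.2 hK)
  set q : Fin n → ℤ := fun i => round (N * (c i : ℝ))
  have hq : ∀ i, 0 ≤ q i := fun i => round_nonneg_of_nonneg (mul_nonneg N.cast_nonneg (c i).2)
  have hNl : N • l = ∑ i, q i • m i := by
    rw [← sub_eq_zero]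
    refine hf _ ?_
    have hsub : f (N • l - ∑ i, q i • m i) = ∑ i, (N * (c i : ℝ) - q i) • f (m i) := by
      simp only [map_sub, map_nsmul, map_sum, map_zsmul, ← hsum, hfm, Finset.smul_sum, sub_smul,
        Finset.sum_sub_distrib, ← Nat.cast_smul_eq_nsmul ℝ, ← Int.cast_smul_eq_zsmul ℝ,
        ← Nonneg.coe_smul, smul_smul]
    calc ‖f (N • l - ∑ i, q i • m i)‖ ≤ ∑ i, |N * (c i : ℝ) - q i| * ‖f (m i)‖ := by
          rw [hsub]
          exact (norm_sum_le _ _).trans_eq (by simp [norm_smul])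
      _ ≤ ∑ i, (K + 1)⁻¹ * ‖f (m i)‖ :=
          Finset.sum_le_sum fun i _ => by gcongr; exact (hround i).le
      _ = K / (K + 1) := by rw [← Finset.mul_sum, inv_mul_eq_div]
      _ < 1 := (div_lt_one hK).2 (lt_add_one K)
  refine ⟨N, hN, hNl ▸ M.sum_mem fun i _ => ?_⟩
  rw [← Int.toNat_of_nonneg (hq i), natCast_zsmul]
  exact M.nsmul_mem (hmM i) _

theorem Convex.eq_univ_of_dense {E : Type*} [NormedAddCommGroup E] [NormedSpace ℝ E]
    [FiniteDimensional ℝ E] {s : Set E} (hs : Convex ℝ s) (hd : Dense s) : s = Set.univ := by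
  have hspan : affineSpan ℝ s = ⊤ :=
    eq_top_iff.2 fun x _ => closure_minimal (subset_affineSpan ℝ s)
      (affineSpan ℝ s).closed_of_finiteDimensional (hd x)
  have h := hs.interior_closure_eq_interior_of_nonempty_interior
    (hs.interior_nonempty_iff_affineSpan_eq_top.2 hspan)
  rw [hd.closure_eq, interior_univ] at h
  exact Set.eq_univ_of_univ_subset (h ▸ interior_subset)

theorem PointedCone.exists_strongDual_ne_zero_nonneg_of_ne_top {E : Type*} [NormedAddCommGroup E]
    [NormedSpace ℝ E] [FiniteDimensional ℝ E] {C : PointedCone ℝ E} (hC : C ≠ ⊤) :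
    ∃ f : StrongDual ℝ E, f ≠ 0 ∧ ∀ x ∈ C, 0 ≤ f x := by
  obtain ⟨x₀, hx₀⟩ : ∃ x₀, x₀ ∉ closure (C : Set E) := by
    by_contra! h
    exact hC (SetLike.coe_injective (C.convex.eq_univ_of_dense h))
  obtain ⟨f, hf, hfx₀⟩ := ProperCone.hyperplane_separation_point ⟨C.closure, isClosed_closure⟩ hx₀
  exact ⟨f, by rintro rfl; simp at hfx₀, fun x hx => hf x (subset_closure hx)⟩

theorem Module.Basis.eq_zero_of_norm_baseChange_equivFun_lt_one {ι Λ : Type*} [Fintype ι]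
    [AddCommGroup Λ] (b : Module.Basis ι ℤ Λ) {μ : Λ}
    (h : ‖(b.baseChange ℝ).equivFun (1 ⊗ₜ μ)‖ < 1) : μ = 0 := by
  refine b.repr.injective (Finsupp.ext fun i => ?_)
  have hi := (norm_le_pi_norm _ i).trans_lt h
  simp only [Module.Basis.equivFun_apply, Module.Basis.baseChange_repr_tmul, zsmul_eq_mul, mul_one,
    Real.norm_eq_abs] at hi
  simpa using Int.abs_lt_one_iff.1 (by exact_mod_cast hi)

theorem exists_dominating_linear_form {Λ : Type*} [AddCommGroup Λ]
    [Module.Free ℤ Λ] [Module.Finite ℤ Λ]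
    (X : Set Λ) (hX : IsPositiveSubset X) (hXproper : X ≠ Set.univ) :
    ∃ φ : (ℝ ⊗[ℤ] Λ) →ₗ[ℝ] ℝ, φ ≠ 0 ∧
      X ⊆ {l : Λ | 0 ≤ φ ((1 : ℝ) ⊗ₜ[ℤ] l)} := by
  obtain ⟨l, hl⟩ := (Set.ne_univ_iff_exists_notMem X).1 hXproper
  let b := Module.Free.chooseBasis ℤ Λ
  let e := (b.baseChange ℝ).equivFun
  let f : Λ →+ (_ → ℝ) :=
    e.toLinearMap.toAddMonoidHom.comp (TensorProduct.mk ℤ ℝ Λ 1).toAddMonoidHom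
  have hlC : f l ∉ PointedCone.hull ℝ (f '' X) := fun h => by
    obtain ⟨N, hN, hNl⟩ := hX.toAddSubmonoid.exists_nsmul_mem_of_map_mem_hull f
      (fun μ => b.eq_zero_of_norm_baseChange_equivFun_lt_one) h
    exact hX.nsmul_notMem hl hN.ne' hNl
  obtain ⟨ψ, hψ, hψC⟩ :=
    PointedCone.exists_strongDual_ne_zero_nonneg_of_ne_top (C := .hull ℝ (f '' X))
      fun h => hlC (h ▸ Submodule.mem_top)
  refine ⟨ψ.toLinearMap ∘ₗ e.toLinearMap, fun h => hψ ?_,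
    fun x hx => hψC _ (Submodule.subset_span ⟨x, hx, rfl⟩)⟩
  ext v
  simpa using LinearMap.congr_fun h (e.symm v)
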